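/- Let f₀ ∈ C¹(ℝ²;ℝ) and let X₀ = ∇⊥f₀ = (-∂₂f₀, ∂₁f₀). Let D₀ = {x : f₀(x) > 0} with boundary ∂D₀ = {x : f₀(x) = 0}, and let ω₀ = 1_{D₀} be the indicator function of D₀. Then the directional derivative in the distributional sense ∂_{X₀} ω₀ := div(ω₀ X₀) vanishes: ∂_{X₀}ω₀ = 0 as a distribution. -/

import Mathlib

open MeasureTheory Real Set Filter Topology
open scoped ENNReal

noncomputable section

abbrev E2 := EuclideanSpace ℝ (Fin 2)

def pd (j : Fin 2) {F : Type*} [NormedAddCommGroup F] [NormedSpace ℝ F]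
    (g : E2 → F) (x : E2) : F := fderiv ℝ g x (EuclideanSpace.single j 1)



-- deriv of smoothTransition vanishes off [0,1]
lemma derivST_eq_zero {s : ℝ} (h : s < 0 ∨ 1 < s) : deriv Real.smoothTransition s = 0 := by
  rcases h with h | h
  · have : Real.smoothTransition =ᶠ[𝓝 s] fun _ => (0:ℝ) := by
      filter_upwards [Iio_mem_nhds h] with y hy
      exact Real.smoothTransition.zero_of_nonpos hy.le
    rw [this.deriv_eq, deriv_const]
  · have : Real.smoothTransition =ᶠ[𝓝 s] fun _ => (1:ℝ) := by
      filter_upwards [Ioi_mem_nhds h] with y hy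
      exact Real.smoothTransition.one_of_one_le hy.le
    rw [this.deriv_eq, deriv_const]

lemma derivST_bound : ∃ C : ℝ, 0 ≤ C ∧ ∀ s : ℝ, |deriv Real.smoothTransition s| ≤ C := by
  have hcont : Continuous (deriv Real.smoothTransition) :=
    (Real.smoothTransition.contDiff (n := 1)).continuous_deriv le_rfl
  have hsupp : HasCompactSupport (deriv Real.smoothTransition) := by
    apply HasCompactSupport.intro (isCompact_Icc (a := (0:ℝ)) (b := 1))
    intro s hs
    rcases not_and_or.1 hs with h | h
    · exact derivST_eq_zero (Or.inl (lt_of_not_ge h))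
    · exact derivST_eq_zero (Or.inr (lt_of_not_ge h))
  obtain ⟨C, hC⟩ := hsupp.exists_bound_of_continuous hcont
  exact ⟨C, le_trans (abs_nonneg _) (by simpa using hC 0), fun s => by simpa using hC s⟩

lemma contDiff_pd {φ : E2 → ℝ} (hφ : ContDiff ℝ (⊤ : ℕ∞) φ) (j : Fin 2) :
    ContDiff ℝ (⊤ : ℕ∞) (pd j φ) :=
  (hφ.fderiv_right (m := (⊤ : ℕ∞)) le_rfl).clm_apply contDiff_const

lemma hcs_pd {φ : E2 → ℝ} (hc : HasCompactSupport φ) (j : Fin 2) :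
    HasCompactSupport (pd j φ) :=
  hc.fderiv_apply ℝ _

lemma key_ibp (g : E2 → ℝ) (hg : ContDiff ℝ 1 g)
    (φ : E2 → ℝ) (hφ : ContDiff ℝ (⊤ : ℕ∞) φ) (hφc : HasCompactSupport φ) :
    ∫ x, (-(pd 1 g x) * pd 0 φ x + pd 0 g x * pd 1 φ x) = 0 := by
  have hgd : Differentiable ℝ g := hg.differentiable (by norm_num)
  have hgc : Continuous g := hgd.continuous
  have hpdφ : ∀ j, ContDiff ℝ (⊤ : ℕ∞) (pd j φ) := contDiff_pd hφ
  have hpdφc : ∀ j, HasCompactSupport (pd j φ) := hcs_pd hφc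
  have hpdg : ∀ j, Continuous (pd j g) := fun j =>
    (hg.continuous_fderiv (by norm_num)).clm_apply continuous_const
  -- integrability helpers
  have hint1 : ∀ i j : Fin 2, Integrable (fun x => pd i g x * pd j φ x) :=
    fun i j => ((hpdg i).mul (hpdφ j).continuous).integrable_of_hasCompactSupport
      ((hpdφc j).mul_left)
  have hint2 : ∀ i j : Fin 2, Integrable (fun x => g x * pd i (pd j φ) x) := by
    intro i j
    exact (hgc.mul (contDiff_pd (hpdφ j) i).continuous).integrable_of_hasCompactSupport
      ((hcs_pd (hpdφc j) i).mul_left)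
  have hint3 : ∀ j : Fin 2, Integrable (fun x => g x * pd j φ x) :=
    fun j => (hgc.mul (hpdφ j).continuous).integrable_of_hasCompactSupport
      ((hpdφc j).mul_left)
  -- IBP : ∫ pd i g * pd j φ = - ∫ g * pd i (pd j φ)
  have ibp : ∀ i j : Fin 2, ∫ x, pd i g x * pd j φ x = - ∫ x, g x * pd i (pd j φ) x := by
    intro i j
    have := integral_mul_fderiv_eq_neg_fderiv_mul_of_integrable (μ := volume)
      (f := g) (g := pd j φ) (v := EuclideanSpace.single i 1)
      (hint1 i j) (hint2 i j) (hint3 j) (fun x _ => hgd x) (fun x _ => (hpdφ j).differentiable (by simp) x)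
    -- this : ∫ g * pd i (pd j φ) = - ∫ pd i g * pd j φ
    simp only [pd] at this ⊢
    linarith [this]
  -- Schwarz symmetry
  have hsym : ∀ x, pd 0 (pd 1 φ) x = pd 1 (pd 0 φ) x := by
    intro x
    have hd : DifferentiableAt ℝ (fderiv ℝ φ) x :=
      ((hφ.fderiv_right (m := (⊤ : ℕ∞)) le_rfl).differentiable (by simp)).differentiableAt
    have h : ∀ v : E2, fderiv ℝ (fun y => fderiv ℝ φ y v) x
        = (fderiv ℝ φ x).comp (fderiv ℝ (fun _ => v) x) + (fderiv ℝ (fderiv ℝ φ) x).flip v :=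
      fun v => fderiv_clm_apply hd (differentiableAt_const v)
    have hs : IsSymmSndFDerivAt ℝ φ x :=
      ((hφ.of_le (WithTop.coe_le_coe.mpr le_top) : ContDiff ℝ 2 φ).contDiffAt).isSymmSndFDerivAt (by simp)
    have e1 : pd 1 φ = fun y => fderiv ℝ φ y (EuclideanSpace.single 1 1) := rfl
    have e0 : pd 0 φ = fun y => fderiv ℝ φ y (EuclideanSpace.single 0 1) := rfl
    simp only [pd, e1, e0, h, fderiv_fun_const, Pi.zero_apply, ContinuousLinearMap.comp_zero,
      ContinuousLinearMap.add_apply, ContinuousLinearMap.zero_apply, zero_add,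
      ContinuousLinearMap.flip_apply]
    exact hs.eq _ _
  calc ∫ x, (-(pd 1 g x) * pd 0 φ x + pd 0 g x * pd 1 φ x)
      = (∫ x, -(pd 1 g x * pd 0 φ x)) + ∫ x, pd 0 g x * pd 1 φ x := by
        rw [← integral_add ((hint1 1 0).neg') (hint1 0 1)]
        simp [neg_mul]
    _ = -(∫ x, pd 1 g x * pd 0 φ x) + ∫ x, pd 0 g x * pd 1 φ x := by rw [integral_neg]
    _ = (∫ x, g x * pd 1 (pd 0 φ) x) - ∫ x, g x * pd 0 (pd 1 φ) x := by
        rw [ibp 1 0, ibp 0 1]; ring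
    _ = 0 := by
        rw [sub_eq_zero]
        refine integral_congr_ae (Eventually.of_forall fun x => ?_)
        show g x * pd 1 (pd 0 φ) x = g x * pd 0 (pd 1 φ) x
        rw [hsym x]

/-- Derivative of `t ↦ t * smoothTransition (n t - 1)`. -/
def dTheta (n : ℕ) (t : ℝ) : ℝ :=
  Real.smoothTransition ((n : ℝ) * t - 1)
    + t * ((n : ℝ) * deriv Real.smoothTransition ((n : ℝ) * t - 1))

lemma theta_contDiff (n : ℕ) : ContDiff ℝ 1 (fun t : ℝ => t * Real.smoothTransition ((n:ℝ)*t - 1)) :=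
  contDiff_id.mul ((Real.smoothTransition.contDiff).comp
    ((contDiff_const.mul contDiff_id).sub contDiff_const))

lemma theta_hasDerivAt (n : ℕ) (t : ℝ) :
    HasDerivAt (fun t : ℝ => t * Real.smoothTransition ((n:ℝ)*t - 1)) (dTheta n t) t := by
  have hu : HasDerivAt (fun t : ℝ => (n:ℝ)*t - 1) (n:ℝ) t := by
    simpa using ((hasDerivAt_id t).const_mul (n:ℝ)).sub_const 1
  have hST : HasDerivAt Real.smoothTransition
      (deriv Real.smoothTransition ((n:ℝ)*t-1)) ((n:ℝ)*t-1) :=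
    (((Real.smoothTransition.contDiff (n := 1)).differentiable (by norm_num)) _).hasDerivAt
  have hc : HasDerivAt (fun t : ℝ => Real.smoothTransition ((n:ℝ)*t - 1))
      (deriv Real.smoothTransition ((n:ℝ)*t-1) * (n:ℝ)) t := by exact hST.comp t hu
  have h := (hasDerivAt_id t).mul hc
  have h2 : dTheta n t = 1 * Real.smoothTransition ((n:ℝ)*t-1)
      + t * (deriv Real.smoothTransition ((n:ℝ)*t-1) * (n:ℝ)) := by unfold dTheta; ring
  rw [h2]; exact h

lemma dTheta_bound {C : ℝ} (hC : ∀ s, |deriv Real.smoothTransition s| ≤ C)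
    (n : ℕ) (t : ℝ) : |dTheta n t| ≤ 1 + 2 * C := by
  set s := (n:ℝ)*t - 1 with hs
  by_cases hd : deriv Real.smoothTransition s = 0
  · rw [dTheta, ← hs, hd]
    simp only [mul_zero, add_zero]
    rw [abs_of_nonneg (Real.smoothTransition.nonneg _)]
    have := Real.smoothTransition.le_one s
    nlinarith [le_trans (abs_nonneg _) (hC 0)]
  · have hsmem : 0 ≤ s ∧ s ≤ 1 := by
      by_contra h
      rcases not_and_or.1 h with h | h
      · exact hd (derivST_eq_zero (Or.inl (lt_of_not_ge h)))
      · exact hd (derivST_eq_zero (Or.inr (lt_of_not_ge h)))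
    have hnt : 1 ≤ (n:ℝ)*t ∧ (n:ℝ)*t ≤ 2 := by constructor <;> [linarith [hsmem.1]; linarith [hsmem.2]]
    have habs : |t * ((n:ℝ) * deriv Real.smoothTransition s)| ≤ 2 * C := by
      rw [show t * ((n:ℝ) * deriv Real.smoothTransition s)
          = ((n:ℝ)*t) * deriv Real.smoothTransition s by ring, abs_mul]
      have h1 : |(n:ℝ)*t| ≤ 2 := by rw [abs_of_nonneg (by linarith [hnt.1])]; exact hnt.2
      exact mul_le_mul h1 (hC s) (abs_nonneg _) (by norm_num)
    calc |dTheta n t| ≤ |Real.smoothTransition s| + |t * ((n:ℝ) * deriv Real.smoothTransition s)| := by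
          rw [dTheta, ← hs]; exact abs_add_le _ _
      _ ≤ 1 + 2 * C := by
          refine add_le_add ?_ habs
          rw [abs_of_nonneg (Real.smoothTransition.nonneg _)]
          exact Real.smoothTransition.le_one s

lemma dTheta_of_nonpos {t : ℝ} (ht : t ≤ 0) (n : ℕ) : dTheta n t = 0 := by
  have hs : (n:ℝ)*t - 1 < 0 := by nlinarith [Nat.cast_nonneg (α := ℝ) n]
  rw [dTheta, Real.smoothTransition.zero_of_nonpos hs.le, derivST_eq_zero (Or.inl hs)]
  ring

lemma dTheta_of_big {t : ℝ} {n : ℕ} (ht : 2 < (n:ℝ) * t) : dTheta n t = 1 := by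
  have hs : 1 < (n:ℝ)*t - 1 := by linarith
  rw [dTheta, Real.smoothTransition.one_of_one_le hs.le, derivST_eq_zero (Or.inr hs)]
  ring

lemma pd_comp (f₀ : E2 → ℝ) (hf₀ : ContDiff ℝ 1 f₀) (n : ℕ) (j : Fin 2) (x : E2) :
    pd j (fun y => f₀ y * Real.smoothTransition ((n:ℝ) * f₀ y - 1)) x
      = dTheta n (f₀ x) * pd j f₀ x := by
  have h : HasFDerivAt (fun y => f₀ y * Real.smoothTransition ((n:ℝ) * f₀ y - 1))
      (dTheta n (f₀ x) • fderiv ℝ f₀ x) x :=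
    (theta_hasDerivAt n (f₀ x)).comp_hasFDerivAt x
      ((hf₀.differentiable (by norm_num)) x).hasFDerivAt
  rw [pd, h.fderiv]
  simp [smul_eq_mul, pd]

/-- For `f₀ ∈ C¹` and the divergence-free field `X₀ = ∇⊥f₀ = (-∂₂f₀, ∂₁f₀)`, the weak
directional derivative `∂_{X₀}1_{D₀} = div(1_{D₀} X₀)` of the indicator of
`D₀ = {f₀ > 0}` (with `∂D₀ = {f₀ = 0}`) vanishes as a distribution, i.e.
`∫_{D₀} X₀·∇φ = 0` for every test function `φ`. -/
theorem indicator_tangential_derivative_vanishes (f₀ : E2 → ℝ)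
    (hf₀ : ContDiff ℝ 1 f₀)
    (hbd : frontier {x : E2 | 0 < f₀ x} = {x : E2 | f₀ x = 0}) :
    ∀ φ : E2 → ℝ, ContDiff ℝ (⊤ : ℕ∞) φ → HasCompactSupport φ →
      (∫ x in {x : E2 | 0 < f₀ x},
        (-(pd 1 f₀ x) * pd 0 φ x + pd 0 f₀ x * pd 1 φ x)) = 0 := by
  intro φ hφ hφc
  obtain ⟨C, hC0, hC⟩ := derivST_bound
  set F : E2 → ℝ := fun x => (-(pd 1 f₀ x) * pd 0 φ x + pd 0 f₀ x * pd 1 φ x) with hF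
  have hpdf₀ : ∀ j, Continuous (pd j f₀) := fun j =>
    (hf₀.continuous_fderiv (by norm_num)).clm_apply continuous_const
  have hpdφ : ∀ j : Fin 2, Continuous (pd j φ) := fun j => (contDiff_pd hφ j).continuous
  have hFcont : Continuous F := by
    apply Continuous.add
    · exact ((hpdf₀ 1).neg.mul (hpdφ 0))
    · exact ((hpdf₀ 0).mul (hpdφ 1))
  have hFsupp : HasCompactSupport F :=
    ((hcs_pd hφc 0).mul_left).add ((hcs_pd hφc 1).mul_left)
  have hFint : Integrable F := hFcont.integrable_of_hasCompactSupport hFsupp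
  have hSmeas : MeasurableSet {x : E2 | 0 < f₀ x} :=
    (isOpen_lt continuous_const (hf₀.continuous)).measurableSet
  -- each approximate integral vanishes
  have hIn : ∀ n : ℕ, ∫ x, dTheta n (f₀ x) * F x = 0 := by
    intro n
    have hkey := key_ibp (fun y => f₀ y * Real.smoothTransition ((n:ℝ) * f₀ y - 1))
      ((theta_contDiff n).comp hf₀) φ hφ hφc
    rw [← hkey]
    apply integral_congr_ae
    filter_upwards with x
    show dTheta n (f₀ x) * F x = _
    rw [hF]
    simp only [pd_comp f₀ hf₀ n _ x]
    ring
  -- dominated convergence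
  have hmeas : ∀ n : ℕ, AEStronglyMeasurable (fun x => dTheta n (f₀ x) * F x) volume := by
    intro n
    have hcont : Continuous (dTheta n) := by
      unfold dTheta
      have h1 : Continuous (fun t : ℝ => (n:ℝ)*t - 1) := by fun_prop
      exact (Real.smoothTransition.continuous.comp h1).add
        (continuous_id.mul (continuous_const.mul
          (((Real.smoothTransition.contDiff (n := 1)).continuous_deriv le_rfl).comp h1)))
    exact ((hcont.comp hf₀.continuous).mul hFcont).aestronglyMeasurable
  have hbound : ∀ n : ℕ, ∀ᵐ x ∂(volume : Measure E2),
      ‖dTheta n (f₀ x) * F x‖ ≤ (1 + 2*C) * ‖F x‖ := by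
    intro n
    filter_upwards with x
    rw [norm_mul]
    exact mul_le_mul_of_nonneg_right (dTheta_bound hC n (f₀ x)) (norm_nonneg _)
  have hbint : Integrable (fun x => (1 + 2*C) * ‖F x‖) := (hFint.norm.const_mul _)
  have hlim : ∀ᵐ x ∂(volume : Measure E2), Tendsto (fun n => dTheta n (f₀ x) * F x) atTop
      (𝓝 (Set.indicator {x : E2 | 0 < f₀ x} F x)) := by
    filter_upwards with x
    by_cases hx : 0 < f₀ x
    · rw [Set.indicator_of_mem (show x ∈ {x : E2 | 0 < f₀ x} from hx) F]
      apply tendsto_const_nhds.congr'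
      obtain ⟨N, hN⟩ := exists_nat_gt (2 / f₀ x)
      filter_upwards [eventually_ge_atTop N] with n hn
      have h2 : 2 < (n:ℝ) * f₀ x := by
        have : 2 / f₀ x < (n:ℝ) := lt_of_lt_of_le hN (by exact_mod_cast hn)
        calc 2 = (2 / f₀ x) * f₀ x := by field_simp
          _ < (n:ℝ) * f₀ x := by exact mul_lt_mul_of_pos_right this hx
      rw [dTheta_of_big h2, one_mul]
    · rw [Set.indicator_of_notMem (show x ∉ {x : E2 | 0 < f₀ x} from hx) F]
      have : ∀ n : ℕ, dTheta n (f₀ x) * F x = 0 := fun n => by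
        rw [dTheta_of_nonpos (le_of_not_gt hx), zero_mul]
      simpa [this] using tendsto_const_nhds
  have htend := tendsto_integral_of_dominated_convergence _ hmeas hbint hbound hlim
  simp only [hIn] at htend
  have h0 : (∫ x, Set.indicator {x : E2 | 0 < f₀ x} F x) = 0 :=
    (tendsto_nhds_unique tendsto_const_nhds htend).symm
  rw [← integral_indicator hSmeas]
  exact h0
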